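/- Let k ≥ 2 be an integer and let (u,v) ∈ [0,1]², written as u = (i+t)/k and v = (j+s)/k with i = ⌊uk⌋, j = ⌊vk⌋, t = uk−i ∈ [0,1), s = vk−j ∈ [0,1). If a permutation π of {1,…,k} is chosen uniformly at random among all k! permutations, then the variance of the bilinear extension X̂_k(u,v) equals (1/(k−1))·(u(1−u) − t(1−t)/k)·(v(1−v) − s(1−s)/k). -/

import Mathlib

open Nat Finset

/-- `Nperm k π i j` is the number of `m ∈ {1,…,k}` with `m ≤ i` and `π(m) ≤ j`,
where the permutation `π` of `{1,…,k}` is represented 0-indexed on `Fin k`. -/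
def Nperm (k : ℕ) (π : Equiv.Perm (Fin k)) (i j : ℕ) : ℕ :=
  (Finset.univ.filter fun m : Fin k => (m : ℕ) < i ∧ ((π m : ℕ) < j)).card

/-- The bilinear (checkerboard) extension `Ĉ_π(u,v)` of the permutation copula `C_π`,
where `u = (i+t)/k`, `v = (j+s)/k` with `i = ⌊uk⌋`, `j = ⌊vk⌋`, `t = uk−i`, `s = vk−j`. -/
noncomputable def Chat (k : ℕ) (π : Equiv.Perm (Fin k)) (i j : ℕ) (t s : ℝ) : ℝ :=
  (1 - t) * (1 - s) * ((Nperm k π i j : ℝ) / k) +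
    t * (1 - s) * ((Nperm k π (i + 1) j : ℝ) / k) +
    (1 - t) * s * ((Nperm k π i (j + 1) : ℝ) / k) +
    t * s * ((Nperm k π (i + 1) (j + 1) : ℝ) / k)


/-- sum of g(π m) over all permutations, times k. -/
lemma sum_perm_apply (k : ℕ) (g : Fin k → ℝ) (m : Fin k) :
    (k : ℝ) * ∑ π : Equiv.Perm (Fin k), g (π m) = (k ! : ℝ) * ∑ n, g n := by
  have key : ∀ m' : Fin k, (∑ π : Equiv.Perm (Fin k), g (π m'))
      = ∑ π : Equiv.Perm (Fin k), g (π m) := by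
    intro m'
    calc (∑ π : Equiv.Perm (Fin k), g (π m'))
        = ∑ π : Equiv.Perm (Fin k), g (((Equiv.mulRight (Equiv.swap m' m)) π) m) := by
          apply Finset.sum_congr rfl; intro π _
          simp [Equiv.Perm.mul_apply]
      _ = ∑ π : Equiv.Perm (Fin k), g (π m) := Equiv.sum_comp (Equiv.mulRight (Equiv.swap m' m)) (fun π => g (π m))
  calc (k : ℝ) * ∑ π : Equiv.Perm (Fin k), g (π m)
      = ∑ m' : Fin k, ∑ π : Equiv.Perm (Fin k), g (π m') := by
        rw [Finset.sum_congr rfl (fun m' _ => key m'), Finset.sum_const]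
        simp [mul_comm]
    _ = ∑ π : Equiv.Perm (Fin k), ∑ m' : Fin k, g (π m') := Finset.sum_comm
    _ = ∑ π : Equiv.Perm (Fin k), ∑ n, g n := by
        apply Finset.sum_congr rfl; intro π _; exact Equiv.sum_comp π g
    _ = (k ! : ℝ) * ∑ n, g n := by
        rw [Finset.sum_const]; simp [Fintype.card_perm, mul_comm]

lemma sum_perm_pair (k : ℕ) (g h : Fin k → ℝ) {m m' : Fin k} (hmm : m ≠ m') :
    ((k : ℝ) * ((k : ℝ) - 1)) * ∑ π : Equiv.Perm (Fin k), g (π m) * h (π m') =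
      (k ! : ℝ) * ((∑ n, g n) * (∑ n, h n) - ∑ n, g n * h n) := by
  have key : ∀ a a' : Fin k, a ≠ a' →
      (∑ π : Equiv.Perm (Fin k), g (π a) * h (π a'))
        = ∑ π : Equiv.Perm (Fin k), g (π m) * h (π m') := by
    intro a a' haa
    set τ : Equiv.Perm (Fin k) := Equiv.swap m a with hτ
    set b : Fin k := τ m' with hb
    have hba : b ≠ a := by
      intro hcontra
      have h1 : τ m = a := Equiv.swap_apply_left m a
      exact hmm.symm (τ.injective ((hb.symm.trans hcontra).trans h1.symm))
    set ρ : Equiv.Perm (Fin k) := Equiv.swap b a' with hρ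
    set σ : Equiv.Perm (Fin k) := ρ * τ with hσ
    have hσm : σ m = a := by
      have h1 : τ m = a := Equiv.swap_apply_left m a
      have h2 : ρ a = a := by
        apply Equiv.swap_apply_of_ne_of_ne (Ne.symm hba) haa
      simp [hσ, Equiv.Perm.mul_apply, h1, h2]
    have hσm' : σ m' = a' := by
      simp [hσ, Equiv.Perm.mul_apply, ← hb, hρ]
    calc (∑ π : Equiv.Perm (Fin k), g (π a) * h (π a'))
        = ∑ π : Equiv.Perm (Fin k), g (((Equiv.mulRight σ) π) m) * h (((Equiv.mulRight σ) π) m') := by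
          apply Finset.sum_congr rfl; intro π _
          simp [Equiv.Perm.mul_apply, hσm, hσm']
      _ = ∑ π : Equiv.Perm (Fin k), g (π m) * h (π m') :=
          Equiv.sum_comp (Equiv.mulRight σ) (fun π => g (π m) * h (π m'))
  calc ((k : ℝ) * ((k : ℝ) - 1)) * ∑ π : Equiv.Perm (Fin k), g (π m) * h (π m')
      = ∑ a : Fin k, ∑ a' ∈ Finset.univ.erase a, ∑ π : Equiv.Perm (Fin k), g (π a) * h (π a') := by
        rw [Finset.sum_congr rfl (fun a _ => Finset.sum_congr rfl
          (fun a' ha' => key a a' (Ne.symm (Finset.ne_of_mem_erase ha'))))]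
        have hcard : ∀ a : Fin k, (Finset.univ.erase a).card = k - 1 := by
          intro a; rw [Finset.card_erase_of_mem (Finset.mem_univ a)]; simp
        simp only [Finset.sum_const, hcard, nsmul_eq_mul, Finset.card_univ, Fintype.card_fin]
        have hk1 : (1:ℕ) ≤ k := m.pos
        push_cast [hk1]
        ring
    _ = ∑ π : Equiv.Perm (Fin k), ∑ a : Fin k, ∑ a' ∈ Finset.univ.erase a, g (π a) * h (π a') := by
        rw [Finset.sum_comm]
        apply Finset.sum_congr rfl; intro a _
        exact Finset.sum_comm
    _ = ∑ π : Equiv.Perm (Fin k), ((∑ n, g n) * (∑ n, h n) - ∑ n, g n * h n) := by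
        apply Finset.sum_congr rfl; intro π _
        have : ∀ a : Fin k, ∑ a' ∈ Finset.univ.erase a, g (π a) * h (π a')
            = g (π a) * ((∑ n, h n) - h (π a)) := by
          intro a
          rw [← Finset.mul_sum, Finset.sum_erase_eq_sub (Finset.mem_univ a)]
          rw [show (∑ a' : Fin k, h (π a')) = ∑ n, h n from Equiv.sum_comp π h]
        rw [Finset.sum_congr rfl (fun a _ => this a)]
        have e1 : ∑ a : Fin k, g (π a) * ((∑ n, h n) - h (π a))
            = (∑ a : Fin k, g (π a)) * (∑ n, h n) - ∑ a : Fin k, g (π a) * h (π a) := by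
          rw [Finset.sum_congr rfl (fun a _ => mul_sub (g (π a)) _ _),
            Finset.sum_sub_distrib, ← Finset.sum_mul]
        rw [e1, show (∑ a : Fin k, g (π a)) = ∑ n, g n from Equiv.sum_comp π g,
          show (∑ a : Fin k, g (π a) * h (π a)) = ∑ n, g n * h n from
            Equiv.sum_comp π (fun n => g n * h n)]
    _ = (k ! : ℝ) * ((∑ n, g n) * (∑ n, h n) - ∑ n, g n * h n) := by
        rw [Finset.sum_const]; simp [Fintype.card_perm, mul_comm]


noncomputable def wA (k i : ℕ) (t : ℝ) (m : Fin k) : ℝ :=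
  (1 - t) * (if (m : ℕ) < i then 1 else 0) + t * (if (m : ℕ) < i + 1 then 1 else 0)

lemma nperm_eq (k : ℕ) (π : Equiv.Perm (Fin k)) (i j : ℕ) :
    ((Nperm k π i j : ℕ) : ℝ)
      = ∑ m : Fin k, (if (m : ℕ) < i then (1:ℝ) else 0) * (if (π m : ℕ) < j then 1 else 0) := by
  unfold Nperm
  rw [Finset.card_filter]
  push_cast
  apply Finset.sum_congr rfl; intro m _
  by_cases h1 : (m : ℕ) < i <;> by_cases h2 : ((π m : ℕ) < j) <;> simp [h1, h2]

lemma chat_eq (k : ℕ) (π : Equiv.Perm (Fin k)) (i j : ℕ) (t s : ℝ) :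
    Chat k π i j t s = (∑ m : Fin k, wA k i t m * wA k j s (π m)) / k := by
  have expand : ∀ m : Fin k, wA k i t m * wA k j s (π m) =
      (1 - t) * (1 - s) * ((if (m : ℕ) < i then (1:ℝ) else 0) * (if (π m : ℕ) < j then 1 else 0)) +
      t * (1 - s) * ((if (m : ℕ) < i + 1 then (1:ℝ) else 0) * (if (π m : ℕ) < j then 1 else 0)) +
      (1 - t) * s * ((if (m : ℕ) < i then (1:ℝ) else 0) * (if (π m : ℕ) < j + 1 then 1 else 0)) +
      t * s * ((if (m : ℕ) < i + 1 then (1:ℝ) else 0) * (if (π m : ℕ) < j + 1 then 1 else 0)) := by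
    intro m; unfold wA; ring
  rw [Finset.sum_congr rfl (fun m _ => expand m)]
  simp only [Finset.sum_add_distrib, ← Finset.mul_sum]
  unfold Chat
  rw [nperm_eq, nperm_eq, nperm_eq, nperm_eq]
  ring

lemma sum_ind (k i : ℕ) :
    ∑ m : Fin k, (if (m : ℕ) < i then (1:ℝ) else 0) = (min i k : ℕ) := by
  rw [Fin.sum_univ_eq_sum_range (fun n => if n < i then (1:ℝ) else 0)]
  induction k with
  | zero => simp
  | succ n ih =>
    rw [Finset.sum_range_succ, ih]
    by_cases h : n < i
    · rw [if_pos h]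
      have : min i (n + 1) = min i n + 1 := by omega
      rw [this]; push_cast; ring
    · rw [if_neg h]
      have : min i (n + 1) = min i n := by omega
      rw [this]; ring

lemma sum_wA (k i : ℕ) (t : ℝ) (hik : i ≤ k) (hit : i = k → t = 0) :
    ∑ m : Fin k, wA k i t m = i + t := by
  unfold wA
  rw [Finset.sum_add_distrib, ← Finset.mul_sum, ← Finset.mul_sum, sum_ind, sum_ind]
  rcases Nat.lt_or_ge i k with h | h
  · have h1 : min i k = i := by omega
    have h2 : min (i + 1) k = i + 1 := by omega
    rw [h1, h2]; push_cast; ring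
  · have hik' : i = k := le_antisymm hik h
    have ht0 : t = 0 := hit hik'
    subst hik'; subst ht0
    simp

lemma sum_wA_sq (k i : ℕ) (t : ℝ) (hik : i ≤ k) (hit : i = k → t = 0) :
    ∑ m : Fin k, wA k i t m * wA k i t m = i + t ^ 2 := by
  have expand : ∀ m : Fin k, wA k i t m * wA k i t m =
      (1 - t ^ 2) * (if (m : ℕ) < i then (1:ℝ) else 0)
        + t ^ 2 * (if (m : ℕ) < i + 1 then 1 else 0) := by
    intro m; unfold wA
    by_cases h1 : (m : ℕ) < i
    · have h2 : (m : ℕ) < i + 1 := by omega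
      simp only [if_pos h1, if_pos h2]; ring
    · by_cases h2 : (m : ℕ) < i + 1
      · simp only [if_neg h1, if_pos h2]; ring
      · simp only [if_neg h1, if_neg h2]; ring
  rw [Finset.sum_congr rfl (fun m _ => expand m), Finset.sum_add_distrib,
    ← Finset.mul_sum, ← Finset.mul_sum, sum_ind, sum_ind]
  rcases Nat.lt_or_ge i k with h | h
  · have h1 : min i k = i := by omega
    have h2 : min (i + 1) k = i + 1 := by omega
    rw [h1, h2]; push_cast; ring
  · have hik' : i = k := le_antisymm hik h
    have ht0 : t = 0 := hit hik'
    subst hik'; subst ht0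
    simp



lemma perm_mean (k : ℕ) (hk : 2 ≤ k) (A B : Fin k → ℝ) :
    ∑ π : Equiv.Perm (Fin k), (∑ m, A m * B (π m)) =
      (k ! : ℝ) * (∑ m, A m) * (∑ n, B n) / k := by
  have hK : (k : ℝ) ≠ 0 := by positivity
  have hPB : ∀ m : Fin k, ∑ π : Equiv.Perm (Fin k), B (π m)
      = (k ! : ℝ) * (∑ n, B n) / k := by
    intro m
    rw [eq_div_iff hK, mul_comm _ ((k:ℝ))]
    exact sum_perm_apply k B m
  rw [Finset.sum_comm]
  calc ∑ m : Fin k, ∑ π : Equiv.Perm (Fin k), A m * B (π m)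
      = ∑ m : Fin k, A m * ((k ! : ℝ) * (∑ n, B n) / k) := by
        apply Finset.sum_congr rfl; intro m _
        rw [← Finset.mul_sum, hPB m]
    _ = (k ! : ℝ) * (∑ m, A m) * (∑ n, B n) / k := by
        rw [← Finset.sum_mul]; ring

lemma perm_sq (k : ℕ) (hk : 2 ≤ k) (A B : Fin k → ℝ) :
    ∑ π : Equiv.Perm (Fin k), (∑ m, A m * B (π m)) ^ 2 =
      (k ! : ℝ) * (∑ m, A m * A m) * (∑ n, B n * B n) / k
      + (k ! : ℝ) * ((∑ m, A m) ^ 2 - ∑ m, A m * A m)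
          * ((∑ n, B n) ^ 2 - ∑ n, B n * B n) / ((k : ℝ) * ((k : ℝ) - 1)) := by
  have hK : (k : ℝ) ≠ 0 := by positivity
  have hK1 : (k : ℝ) * ((k : ℝ) - 1) ≠ 0 := by
    have : (2 : ℝ) ≤ (k : ℝ) := by exact_mod_cast hk
    have h1 : (k : ℝ) - 1 ≠ 0 := by linarith
    exact mul_ne_zero hK h1
  have hPB2 : ∀ m : Fin k, ∑ π : Equiv.Perm (Fin k), B (π m) * B (π m)
      = (k ! : ℝ) * (∑ n, B n * B n) / k := by
    intro m
    rw [eq_div_iff hK, mul_comm _ ((k:ℝ))]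
    exact sum_perm_apply k (fun n => B n * B n) m
  have hPBpair : ∀ m m' : Fin k, m ≠ m' →
      ∑ π : Equiv.Perm (Fin k), B (π m) * B (π m')
        = (k ! : ℝ) * ((∑ n, B n) ^ 2 - ∑ n, B n * B n) / ((k : ℝ) * ((k : ℝ) - 1)) := by
    intro m m' hmm
    rw [eq_div_iff hK1, mul_comm _ ((k:ℝ) * ((k:ℝ) - 1)), sum_perm_pair k B B hmm]
    ring
  calc ∑ π : Equiv.Perm (Fin k), (∑ m, A m * B (π m)) ^ 2
      = ∑ π : Equiv.Perm (Fin k), ∑ m : Fin k, ∑ m' : Fin k,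
          (A m * B (π m)) * (A m' * B (π m')) := by
        apply Finset.sum_congr rfl; intro π _
        rw [pow_two, Finset.sum_mul_sum]
    _ = ∑ m : Fin k, ∑ m' : Fin k, ∑ π : Equiv.Perm (Fin k),
          (A m * B (π m)) * (A m' * B (π m')) := by
        rw [Finset.sum_comm]
        apply Finset.sum_congr rfl; intro m _
        exact Finset.sum_comm
    _ = ∑ m : Fin k, (A m * A m * ((k ! : ℝ) * (∑ n, B n * B n) / k)
          + (∑ m' ∈ Finset.univ.erase m, A m * A m'
              * ((k ! : ℝ) * ((∑ n, B n) ^ 2 - ∑ n, B n * B n) / ((k : ℝ) * ((k : ℝ) - 1))))) := by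
        apply Finset.sum_congr rfl; intro m _
        rw [← Finset.add_sum_erase Finset.univ _ (Finset.mem_univ m)]
        congr 1
        · rw [Finset.sum_congr rfl (fun π _ => (show (A m * B (π m)) * (A m * B (π m))
              = A m * A m * (B (π m) * B (π m)) by ring))]
          rw [← Finset.mul_sum, hPB2 m]
        · apply Finset.sum_congr rfl; intro m' hm'
          have hmm : m ≠ m' := fun h => (Finset.ne_of_mem_erase hm') h.symm
          rw [Finset.sum_congr rfl (fun π _ => (show (A m * B (π m)) * (A m' * B (π m'))
              = A m * A m' * (B (π m) * B (π m')) by ring))]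
          rw [← Finset.mul_sum, hPBpair m m' hmm, mul_assoc]
    _ = (k ! : ℝ) * (∑ m, A m * A m) * (∑ n, B n * B n) / k
        + (k ! : ℝ) * ((∑ m, A m) ^ 2 - ∑ m, A m * A m)
            * ((∑ n, B n) ^ 2 - ∑ n, B n * B n) / ((k : ℝ) * ((k : ℝ) - 1)) := by
        rw [Finset.sum_add_distrib]
        congr 1
        · rw [← Finset.sum_mul]; ring
        · have : ∀ m : Fin k, ∑ m' ∈ Finset.univ.erase m, A m * A m'
              * ((k ! : ℝ) * ((∑ n, B n) ^ 2 - ∑ n, B n * B n) / ((k : ℝ) * ((k : ℝ) - 1)))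
              = A m * ((∑ n, A n) - A m)
                * ((k ! : ℝ) * ((∑ n, B n) ^ 2 - ∑ n, B n * B n) / ((k : ℝ) * ((k : ℝ) - 1))) := by
            intro m
            rw [← Finset.sum_mul, ← Finset.mul_sum, Finset.sum_erase_eq_sub (Finset.mem_univ m)]
          rw [Finset.sum_congr rfl (fun m _ => this m), ← Finset.sum_mul]
          have e : ∑ m : Fin k, A m * ((∑ n, A n) - A m)
              = (∑ m, A m) ^ 2 - ∑ m, A m * A m := by
            rw [Finset.sum_congr rfl (fun m _ => mul_sub (A m) _ _), Finset.sum_sub_distrib,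
              ← Finset.sum_mul, pow_two]
          rw [e]; ring

/-- For `(u,v) ∈ [0,1]²` written as `u = (i+t)/k`, `v = (j+s)/k` with `i = ⌊uk⌋`,
`j = ⌊vk⌋`, `t = uk−i`, `s = vk−j`, the variance of the bilinear extension
`X̂_k(u,v)` under the uniform distribution on the `k!` permutations equals
`(1/(k−1))·(u(1−u) − t(1−t)/k)·(v(1−v) − s(1−s)/k)`. -/
theorem stmt_17 (k : ℕ) (hk : 2 ≤ k) (u v : ℝ)
    (hu : u ∈ Set.Icc (0 : ℝ) 1) (hv : v ∈ Set.Icc (0 : ℝ) 1)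
    (i j : ℕ) (t s : ℝ)
    (hi : i = ⌊u * k⌋₊) (hj : j = ⌊v * k⌋₊)
    (ht : t = u * k - i) (hs : s = v * k - j) :
    (1 / (k ! : ℝ)) * (∑ π : Equiv.Perm (Fin k), (Chat k π i j t s) ^ 2) -
        ((1 / (k ! : ℝ)) * ∑ π : Equiv.Perm (Fin k), Chat k π i j t s) ^ 2 =
      (1 / ((k : ℝ) - 1)) * (u * (1 - u) - t * (1 - t) / k) *
        (v * (1 - v) - s * (1 - s) / k) := by
  have hK2 : (2 : ℝ) ≤ (k : ℝ) := by exact_mod_cast hk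
  have hK : (k : ℝ) ≠ 0 := by positivity
  have hK1 : (k : ℝ) - 1 ≠ 0 := by linarith
  have hfac : (k ! : ℝ) ≠ 0 := by positivity
  -- basic facts about i, t
  have hu0 : 0 ≤ u * k := mul_nonneg hu.1 (by positivity)
  have hv0 : 0 ≤ v * k := mul_nonneg hv.1 (by positivity)
  have huk : u * k ≤ (k : ℝ) := by nlinarith [hu.2]
  have hvk : v * k ≤ (k : ℝ) := by nlinarith [hv.2]
  have hik : i ≤ k := by
    rw [hi]
    calc ⌊u * k⌋₊ ≤ ⌊(k : ℝ)⌋₊ := Nat.floor_le_floor huk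
      _ = k := Nat.floor_natCast k
  have hjk : j ≤ k := by
    rw [hj]
    calc ⌊v * k⌋₊ ≤ ⌊(k : ℝ)⌋₊ := Nat.floor_le_floor hvk
      _ = k := Nat.floor_natCast k
  have hifl : (i : ℝ) ≤ u * k := by rw [hi]; exact Nat.floor_le hu0
  have hjfl : (j : ℝ) ≤ v * k := by rw [hj]; exact Nat.floor_le hv0
  have hit : i = k → t = 0 := by
    intro hieq
    rw [ht, hieq]
    have h2 := hifl
    rw [hieq] at h2
    linarith
  have hjs : j = k → s = 0 := by
    intro hjeq
    rw [hs, hjeq]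
    have h2 := hjfl
    rw [hjeq] at h2
    linarith
  have hueq : u = ((i : ℝ) + t) / k := by rw [ht]; field_simp; ring
  have hveq : v = ((j : ℝ) + s) / k := by rw [hs]; field_simp; ring
  -- the weight functions
  set A : Fin k → ℝ := wA k i t with hA
  set B : Fin k → ℝ := wA k j s with hB
  have hSa : ∑ m, A m = (i : ℝ) + t := sum_wA k i t hik hit
  have hQa : ∑ m, A m * A m = (i : ℝ) + t ^ 2 := sum_wA_sq k i t hik hit
  have hSb : ∑ n, B n = (j : ℝ) + s := sum_wA k j s hjk hjs
  have hQb : ∑ n, B n * B n = (j : ℝ) + s ^ 2 := sum_wA_sq k j s hjk hjs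
  have hc1 : ∑ π : Equiv.Perm (Fin k), Chat k π i j t s
      = ((k ! : ℝ) * ((i : ℝ) + t) * ((j : ℝ) + s) / k) / k := by
    rw [Finset.sum_congr rfl (fun π _ => chat_eq k π i j t s), ← Finset.sum_div,
      perm_mean k hk A B, hSa, hSb]
  have hc2 : ∑ π : Equiv.Perm (Fin k), (Chat k π i j t s) ^ 2
      = ((k ! : ℝ) * ((i : ℝ) + t ^ 2) * ((j : ℝ) + s ^ 2) / k
          + (k ! : ℝ) * (((i : ℝ) + t) ^ 2 - ((i : ℝ) + t ^ 2))
              * (((j : ℝ) + s) ^ 2 - ((j : ℝ) + s ^ 2)) / ((k : ℝ) * ((k : ℝ) - 1)))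
        / (k : ℝ) ^ 2 := by
    rw [Finset.sum_congr rfl (fun π _ => (show (Chat k π i j t s) ^ 2
        = (∑ m, A m * B (π m)) ^ 2 / (k : ℝ) ^ 2 by rw [chat_eq k π i j t s, div_pow])),
      ← Finset.sum_div, perm_sq k hk A B, hSa, hQa, hSb, hQb]
  rw [hc1, hc2, hueq, hveq]
  field_simp
  ring
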